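/- If g(n) = O(n^a) as n → ∞, then f(n) = O(n^a · log n) as n → ∞; and if g(n) = Ω(n^a) as n → ∞ (i.e. there are c > 0 and N with g(n) ≥ c · n^a for n ≥ N), then f(n) = Ω(n^a · log n) as n → ∞. -/

import Mathlib

/-!
Dividing by the solution `P n = ∏_{n0 ≤ k < n} (1 + a / k)` of the homogeneous recursion turns
the recursion into `f (n + 1) / P (n + 1) = f n / P n + g n / (n * P (n + 1))`, so `f n / P n` is
`f n0` plus a partial sum of these increments. Euler's limit formula for `Γ` gives
`P n = Θ(n ^ a)`; hence the increments are `O(1 / n)` (resp. `Ω(1 / n)`), and comparison with the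
harmonic series makes their partial sums `O(log n)` (resp. `Ω(log n)`).
-/

open Filter Asymptotics Finset Real Topology

namespace Asymptotics

variable {α : Type*} {l : Filter α}

lemma IsBigO.div_isTheta {f g D E : α → ℝ} (h : f =O[l] g) (hD : D =Θ[l] E) :
    (fun x ↦ f x / D x) =O[l] fun x ↦ g x / E x := by
  simpa only [div_eq_mul_inv] using h.mul hD.inv.isBigO

lemma isBigO_of_eventually_const_mul_le {u v : α → ℝ} {c : ℝ} (hc : 0 < c)
    (h : ∀ᶠ x in l, c * u x ≤ v x) (hu : ∀ᶠ x in l, 0 ≤ u x) : u =O[l] v := by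
  refine IsBigO.of_bound c⁻¹ ?_
  filter_upwards [h, hu] with x hx hux
  calc ‖u x‖ = u x := norm_of_nonneg hux
    _ ≤ c⁻¹ * v x := by rwa [le_inv_mul_iff₀ hc]
    _ ≤ c⁻¹ * ‖v x‖ := by gcongr; exact le_norm_self _

lemma IsBigO.exists_pos_eventually_mul_le {u v : α → ℝ} (h : u =O[l] v)
    (hv : ∀ᶠ x in l, 0 ≤ v x) : ∃ c > 0, ∀ᶠ x in l, c * u x ≤ v x := by
  obtain ⟨C, hC, hCb⟩ := h.exists_pos
  refine ⟨C⁻¹, inv_pos.2 hC, ?_⟩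
  filter_upwards [hCb.bound, hv] with x hx hvx
  calc C⁻¹ * u x ≤ C⁻¹ * ‖u x‖ := by gcongr; exact le_norm_self _
    _ ≤ v x := by rwa [inv_mul_le_iff₀ hC, ← norm_of_nonneg hvx]

end Asymptotics

lemma isTheta_natCast_add_rpow (c a : ℝ) :
    (fun m : ℕ ↦ ((m : ℝ) + c) ^ a) =Θ[atTop] fun m : ℕ ↦ (m : ℝ) ^ a := by
  refine IsTheta.rpow ?_ (.of_forall fun m ↦ m.cast_nonneg) ?_
  · filter_upwards [tendsto_natCast_atTop_atTop.eventually_ge_atTop (-c)] with m hm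
    exact neg_le_iff_add_nonneg.1 hm
  · exact isTheta_of_div_tendsto_nhds_ne_zero (tendsto_natCast_div_add_atTop c) one_ne_zero

lemma isTheta_rpow_of_tendsto_add_div_rpow {u : ℕ → ℝ} {a L : ℝ} (c : ℕ) (hL : L ≠ 0)
    (h : Tendsto (fun m : ℕ ↦ u (m + c) / (m : ℝ) ^ a) atTop (𝓝 L)) :
    u =Θ[atTop] fun n : ℕ ↦ (n : ℝ) ^ a := by
  have hshift : (fun m ↦ u (m + c)) =Θ[atTop] fun m : ℕ ↦ ((m : ℝ) + c) ^ a :=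
    (isTheta_of_div_tendsto_nhds_ne_zero h hL).symm.trans (isTheta_natCast_add_rpow c a).symm
  rw [← map_add_atTop_eq_nat c]
  exact ⟨isBigO_map.2 (by simpa [Function.comp_def] using hshift.1),
    isBigO_map.2 (by simpa [Function.comp_def] using hshift.2)⟩

lemma rpow_div_natCast_mul_rpow_eventuallyEq_inv (a : ℝ) :
    (fun k : ℕ ↦ (k : ℝ) ^ a / (k * (k : ℝ) ^ a)) =ᶠ[atTop] fun k : ℕ ↦ (k : ℝ)⁻¹ := by
  filter_upwards [eventually_gt_atTop 0] with k hk
  field_simp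

lemma log_sub_log_le_sum_Ico_inv {M n : ℕ} (hM : 0 < M) (h : M ≤ n) :
    log n - log M ≤ ∑ k ∈ Ico M n, (k : ℝ)⁻¹ := by
  have hM' : (0 : ℝ) < M := Nat.cast_pos.2 hM
  have hn : (0 : ℝ) < n := hM'.trans_le (by exact_mod_cast h)
  have hint := (inv_antitoneOn_Icc_right hM' (b := (n : ℝ))).integral_le_sum_Ico h
  rwa [integral_inv (Set.notMem_uIcc_of_lt hM' hn), log_div hn.ne' hM'.ne'] at hint

lemma sum_Ico_inv_le_one_add_log {M : ℕ} (hM : 1 ≤ M) (n : ℕ) :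
    ∑ k ∈ Ico M n, (k : ℝ)⁻¹ ≤ 1 + log n :=
  calc ∑ k ∈ Ico M n, (k : ℝ)⁻¹ ≤ ∑ k ∈ Icc 1 n, (k : ℝ)⁻¹ :=
        sum_le_sum_of_subset_of_nonneg (Ico_subset_Icc_self.trans (Icc_subset_Icc_left hM))
          fun _ _ _ ↦ by positivity
    _ = harmonic n := by simp [harmonic_eq_sum_Icc]
    _ ≤ 1 + log n := harmonic_le_one_add_log n

lemma const_isLittleO_log_natCast (c : ℝ) : (fun _ : ℕ ↦ c) =o[atTop] fun n : ℕ ↦ log n :=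
  isLittleO_const_log_atTop.comp_tendsto tendsto_natCast_atTop_atTop

lemma sum_Ico_isBigO_log {d : ℕ → ℝ} (N : ℕ) (hd : d =O[atTop] fun k : ℕ ↦ (k : ℝ)⁻¹) :
    (fun n : ℕ ↦ ∑ k ∈ Ico N n, d k) =O[atTop] fun n : ℕ ↦ log n := by
  obtain ⟨C, hC0, hC⟩ := hd.exists_nonneg
  obtain ⟨M, hM⟩ := eventually_atTop.1 hC.bound
  set M' := max (max N M) 1
  have htail : (fun n : ℕ ↦ ∑ k ∈ Ico M' n, d k) =O[atTop] fun n : ℕ ↦ 1 + log n := by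
    refine IsBigO.of_bound C (.of_forall fun n ↦ ?_)
    calc ‖∑ k ∈ Ico M' n, d k‖ ≤ ∑ k ∈ Ico M' n, ‖d k‖ := norm_sum_le _ _
      _ ≤ ∑ k ∈ Ico M' n, C * (k : ℝ)⁻¹ := sum_le_sum fun k hk ↦ by
          simpa using hM k (le_of_max_le_right (le_of_max_le_left (mem_Ico.1 hk).1))
      _ = C * ∑ k ∈ Ico M' n, (k : ℝ)⁻¹ := (mul_sum ..).symm
      _ ≤ C * ‖1 + log n‖ := by
          gcongr
          exact (sum_Ico_inv_le_one_add_log (le_max_right _ _) n).trans (le_norm_self _)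
  have hlog : (fun n : ℕ ↦ 1 + log n) =O[atTop] fun n : ℕ ↦ log n :=
    (const_isLittleO_log_natCast 1).isBigO.add (isBigO_refl _ _)
  refine ((const_isLittleO_log_natCast (∑ k ∈ Ico N M', d k)).isBigO.add
    (htail.trans hlog)).congr' ?_ .rfl
  filter_upwards [eventually_ge_atTop M'] with n hn
  exact sum_Ico_consecutive _ (le_of_max_le_left (le_max_left _ _)) hn

lemma log_isBigO_sum_Ico {d : ℕ → ℝ} {N : ℕ} (hd : (fun k : ℕ ↦ (k : ℝ)⁻¹) =O[atTop] d)
    (hd0 : ∀ k, N ≤ k → 0 ≤ d k) :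
    (fun n : ℕ ↦ log n) =O[atTop] fun n : ℕ ↦ ∑ k ∈ Ico N n, d k := by
  obtain ⟨C, hC0, hC⟩ := hd.exists_nonneg
  obtain ⟨M, hM⟩ := eventually_atTop.1 hC.bound
  set M' := max (max N M) 1
  have hM'N : N ≤ M' := le_of_max_le_left (le_max_left _ _)
  have hlog : (fun n : ℕ ↦ log n) =O[atTop] fun n : ℕ ↦ log n - log M' :=
    (IsEquivalent.refl.sub_isLittleO (const_isLittleO_log_natCast _)).symm.isBigO
  refine hlog.trans (IsBigO.of_bound C ?_)
  filter_upwards [eventually_ge_atTop M'] with n hn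
  calc ‖log n - log M'‖ = log n - log M' :=
        norm_of_nonneg (sub_nonneg.2 (log_le_log (by positivity) (by exact_mod_cast hn)))
    _ ≤ ∑ k ∈ Ico M' n, (k : ℝ)⁻¹ := log_sub_log_le_sum_Ico_inv (by positivity) hn
    _ ≤ ∑ k ∈ Ico M' n, C * d k := sum_le_sum fun k hk ↦ by
        have hk := (mem_Ico.1 hk).1
        simpa [abs_of_nonneg (hd0 k (hM'N.trans hk))] using
          hM k (le_of_max_le_right (le_of_max_le_left hk))
    _ ≤ ∑ k ∈ Ico N n, C * d k := sum_le_sum_of_subset_of_nonneg (Ico_subset_Ico_left hM'N)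
        fun k hk _ ↦ mul_nonneg hC0 (hd0 k (mem_Ico.1 hk).1)
    _ = C * ∑ k ∈ Ico N n, d k := (mul_sum ..).symm
    _ ≤ C * ‖∑ k ∈ Ico N n, d k‖ := by gcongr; exact le_norm_self _

noncomputable def homogeneousSolution (n0 : ℕ) (a : ℝ) (n : ℕ) : ℝ :=
  ∏ k ∈ Ico n0 n, (1 + a / k)

section HomogeneousSolution

variable {n0 : ℕ} {a : ℝ}

local notation "P" => homogeneousSolution n0 a

lemma homogeneousSolution_succ {n : ℕ} (h : n0 ≤ n) : P (n + 1) = (1 + a / n) * P n := by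
  rw [homogeneousSolution, homogeneousSolution, prod_Ico_succ_top h, mul_comm]

lemma one_add_div_natCast_pos (hn0 : 1 ≤ n0) (ha : -(n0 : ℝ) < a) {k : ℕ} (hk : n0 ≤ k) :
    0 < 1 + a / k := by
  have hk0 : (0 : ℝ) < k := Nat.cast_pos.2 (hn0.trans hk)
  have hk' : (n0 : ℝ) ≤ k := by exact_mod_cast hk
  rw [one_add_div hk0.ne']
  exact div_pos (by linarith) hk0

lemma homogeneousSolution_pos (hn0 : 1 ≤ n0) (ha : -(n0 : ℝ) < a) (n : ℕ) : 0 < P n :=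
  prod_pos fun _ hk ↦ one_add_div_natCast_pos hn0 ha (mem_Ico.mp hk).1

lemma homogeneousSolution_add_mul_GammaSeq (hn0 : 1 ≤ n0) (ha : -(n0 : ℝ) < a) (m : ℕ) :
    P (m + (n0 + 1)) * GammaSeq (n0 + a) m = (m : ℝ) ^ a * GammaSeq n0 m := by
  have hn0' : (0 : ℝ) < n0 := Nat.cast_pos.2 hn0
  have hprod : P (m + (n0 + 1)) * ∏ j ∈ range (m + 1), ((n0 : ℝ) + j)
      = ∏ j ∈ range (m + 1), ((n0 : ℝ) + a + j) := by
    rw [homogeneousSolution, prod_Ico_eq_prod_range, show m + (n0 + 1) - n0 = m + 1 by omega,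
      ← prod_mul_distrib]
    refine prod_congr rfl fun j _ ↦ ?_
    have : (0 : ℝ) < n0 + j := by positivity
    push_cast
    field_simp
    ring
  have hB : (0 : ℝ) < ∏ j ∈ range (m + 1), ((n0 : ℝ) + j) := prod_pos fun j _ ↦ by positivity
  have hP := homogeneousSolution_pos hn0 ha (m + (n0 + 1))
  rw [GammaSeq, GammaSeq, ← hprod, add_comm (n0 : ℝ) a, rpow_add' m.cast_nonneg (by linarith)]
  field_simp

lemma tendsto_homogeneousSolution_add_div_rpow (hn0 : 1 ≤ n0) (ha : -(n0 : ℝ) < a) :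
    Tendsto (fun m : ℕ ↦ P (m + (n0 + 1)) / (m : ℝ) ^ a) atTop
      (𝓝 (Gamma n0 / Gamma (n0 + a))) := by
  have hΓ : Gamma (n0 + a) ≠ 0 := (Gamma_pos_of_pos (by linarith)).ne'
  refine ((GammaSeq_tendsto_Gamma _).div (GammaSeq_tendsto_Gamma _) hΓ).congr' ?_
  filter_upwards [eventually_gt_atTop 0] with m hm
  have hma : (0 : ℝ) < (m : ℝ) ^ a := by positivity
  have hGS : 0 < GammaSeq (n0 + a) m :=
    div_pos (by positivity) (prod_pos fun j _ ↦ by linarith [j.cast_nonneg (α := ℝ)])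
  rw [Pi.div_apply, div_eq_div_iff hGS.ne' hma.ne']
  linarith [homogeneousSolution_add_mul_GammaSeq hn0 ha m]

lemma homogeneousSolution_isTheta (hn0 : 1 ≤ n0) (ha : -(n0 : ℝ) < a) :
    P =Θ[atTop] fun n : ℕ ↦ (n : ℝ) ^ a :=
  isTheta_rpow_of_tendsto_add_div_rpow (n0 + 1)
    (div_pos (Gamma_pos_of_pos (Nat.cast_pos.2 hn0)) (Gamma_pos_of_pos (by linarith))).ne'
    (tendsto_homogeneousSolution_add_div_rpow hn0 ha)

lemma natCast_mul_homogeneousSolution_succ_isTheta (hn0 : 1 ≤ n0) (ha : -(n0 : ℝ) < a) :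
    (fun k : ℕ ↦ k * P (k + 1)) =Θ[atTop] fun k : ℕ ↦ (k : ℝ) * (k : ℝ) ^ a := by
  refine (isTheta_refl _ _).mul (IsTheta.trans ?_ (isTheta_natCast_add_rpow 1 a))
  have hP := homogeneousSolution_isTheta hn0 ha
  exact ⟨by simpa [Function.comp_def] using hP.1.comp_tendsto (tendsto_add_atTop_nat 1),
    by simpa [Function.comp_def] using hP.2.comp_tendsto (tendsto_add_atTop_nat 1)⟩

lemma div_mul_homogeneousSolution_succ_isBigO_inv (hn0 : 1 ≤ n0) (ha : -(n0 : ℝ) < a) {g : ℕ → ℝ}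
    (hg : g =O[atTop] fun n : ℕ ↦ (n : ℝ) ^ a) :
    (fun k : ℕ ↦ g k / (k * P (k + 1))) =O[atTop] fun k : ℕ ↦ (k : ℝ)⁻¹ :=
  (hg.div_isTheta (natCast_mul_homogeneousSolution_succ_isTheta hn0 ha)).congr' .rfl
    (rpow_div_natCast_mul_rpow_eventuallyEq_inv a)

lemma inv_isBigO_div_mul_homogeneousSolution_succ (hn0 : 1 ≤ n0) (ha : -(n0 : ℝ) < a) {g : ℕ → ℝ}
    (hg : (fun n : ℕ ↦ (n : ℝ) ^ a) =O[atTop] g) :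
    (fun k : ℕ ↦ (k : ℝ)⁻¹) =O[atTop] fun k : ℕ ↦ g k / (k * P (k + 1)) :=
  (hg.div_isTheta (natCast_mul_homogeneousSolution_succ_isTheta hn0 ha).symm).congr'
    (rpow_div_natCast_mul_rpow_eventuallyEq_inv a) .rfl

lemma eq_homogeneousSolution_mul_of_rec (hn0 : 1 ≤ n0) (ha : -(n0 : ℝ) < a) {f g : ℕ → ℝ}
    (hrec : ∀ n, n0 ≤ n → f (n + 1) = (1 + a / n) * f n + g n / n) {n : ℕ} (hn : n0 ≤ n) :
    f n = P n * (f n0 + ∑ k ∈ Ico n0 n, g k / (k * P (k + 1))) := by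
  induction n, hn using Nat.le_induction with
  | base => simp [homogeneousSolution]
  | succ n hn ih =>
    have hP := (homogeneousSolution_pos hn0 ha (n + 1)).ne'
    have hincr : P (n + 1) * (g n / (n * P (n + 1))) = g n / n := by
      rw [mul_comm (n : ℝ), ← div_div, mul_div_assoc', mul_div_cancel₀ _ hP]
    rw [sum_Ico_succ_top hn, hrec n hn, ih, ← add_assoc, mul_add _ _ (g n / _), hincr,
      homogeneousSolution_succ hn, mul_assoc]

end HomogeneousSolution

/-- If `g(n) = O(n^a)` then `f(n) = O(n^a · log n)`; and if `g(n) = Ω(n^a)`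
(i.e. there are `c > 0` and `N` with `g(n) ≥ c·n^a` for `n ≥ N`), then
`f(n) = Ω(n^a · log n)`. -/
theorem stmt_8 (n0 : ℕ) (hn0 : 1 ≤ n0) (a : ℝ) (ha : -(n0 : ℝ) < a)
    (f g : ℕ → ℝ)
    (hf : ∀ n, n0 ≤ n → 0 < f n) (hg : ∀ n, n0 ≤ n → 0 < g n)
    (hrec : ∀ n, n0 ≤ n → f (n + 1) = (1 + a / n) * f n + g n / n) :
    ((fun n : ℕ => g n) =O[atTop] (fun n : ℕ => (n : ℝ) ^ a) →
      (fun n : ℕ => f n) =O[atTop] fun n : ℕ => (n : ℝ) ^ a * Real.log n) ∧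
    ((∃ c : ℝ, 0 < c ∧ ∃ N : ℕ, ∀ n, N ≤ n → c * (n : ℝ) ^ a ≤ g n) →
      ∃ c : ℝ, 0 < c ∧ ∃ N : ℕ, ∀ n, N ≤ n → c * ((n : ℝ) ^ a * Real.log n) ≤ f n) := by
  set P := homogeneousSolution n0 a
  set S : ℕ → ℝ := fun n ↦ ∑ k ∈ Ico n0 n, g k / (k * P (k + 1))
  have hP := homogeneousSolution_isTheta hn0 ha
  have hPpos := homogeneousSolution_pos hn0 ha
  have hfP : f =ᶠ[atTop] fun n ↦ P n * (f n0 + S n) :=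
    eventually_atTop.2 ⟨n0, fun n hn ↦ eq_homogeneousSolution_mul_of_rec hn0 ha hrec hn⟩
  constructor
  · intro hgO
    have hS := sum_Ico_isBigO_log n0 (div_mul_homogeneousSolution_succ_isBigO_inv hn0 ha hgO)
    exact (hP.isBigO.mul ((const_isLittleO_log_natCast _).isBigO.add hS)).congr' hfP.symm .rfl
  · rintro ⟨c, hc, N, hN⟩
    have hgΩ : (fun n : ℕ ↦ (n : ℝ) ^ a) =O[atTop] g :=
      isBigO_of_eventually_const_mul_le hc (eventually_atTop.2 ⟨N, hN⟩)
        (.of_forall fun n ↦ by positivity)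
    have hd0 : ∀ k, n0 ≤ k → 0 ≤ g k / (k * P (k + 1)) := fun k hk ↦
      div_nonneg (hg k hk).le (mul_nonneg k.cast_nonneg (hPpos _).le)
    have hS0 : ∀ n, 0 ≤ S n := fun n ↦ sum_nonneg fun k hk ↦ hd0 k (mem_Ico.1 hk).1
    have hS := log_isBigO_sum_Ico (inv_isBigO_div_mul_homogeneousSolution_succ hn0 ha hgΩ) hd0
    obtain ⟨c', hc', hbound⟩ := (hP.symm.isBigO.mul hS).exists_pos_eventually_mul_le
      (.of_forall fun n ↦ mul_nonneg (hPpos n).le (hS0 n))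
    refine ⟨c', hc', eventually_atTop.1 ?_⟩
    filter_upwards [hbound, hfP] with n hn hfn
    rw [hfn]
    exact hn.trans (mul_le_mul_of_nonneg_left (le_add_of_nonneg_left (hf n0 le_rfl).le)
      (hPpos n).le)
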